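/- arXiv:2210.09578 — 2 statements merged into one kernel-verified Lean document; each statement's English description precedes it below -/
import Mathlib

section
/- Let (B_t)_{t≥1}, B, (A_t)_{t≥1}, A be p×p real matrices satisfying: (i) there exist M₁ > 0 and r₁ ∈ (0,1) with ‖B_t − B‖_F ≤ M₁ r₁ᵗ for all t ≥ 1 and ‖Bᵏ‖_F ≤ M₁ r₁ᵏ for all k ≥ 0; (ii) there exists M₃ > 0 such that ‖∏_{i=k}^{l} B_{t−i}‖_F ≤ M₃ for all 0 ≤ k ≤ l < t; (iii) there exist M₂ > 0 and r₂ ∈ (0,1) with ‖A_t − A‖_F ≤ M₂ r₂ᵗ for all t ≥ 1. Then the series S*_∞ := Σ_{j=0}^{∞} B^{j+1} A (B^{j+1})ᵀ converges (absolutely in Frobenius norm), and the matrices S_t := Σ_{j=0}^{t−2} (B_t B_{t−1} ⋯ B_{t−j}) A_{t−j−1} (B_t B_{t−1} ⋯ B_{t−j})ᵀ converge to S*_∞ as t → ∞. -/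
/-!
Write `P_t(j) = B_t B_{t−1} ⋯ B_{t−j}`. Telescoping `P_t(j) − B^{j+1}` one factor at a time and
using the uniform bound on the partial products gives `‖P_t(j) − B^{j+1}‖ ≤ C r₁^{t−j}`, so each
summand of `S_t` converges to the corresponding term of `S*_∞`. Splitting `P_t(j)` after its first
`⌊j/2⌋ + 1` factors, which are then close to the small matrix `B^{⌊j/2⌋+1}`, and bounding the rest
by `M₃` shows `‖P_t(j)‖² ≤ D r₁^j` uniformly in `t`. The summands are therefore dominated by a
geometric series, and Tannery's theorem gives `S_t → S*_∞`.
-/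

open Matrix Set Filter

/-- The Frobenius norm of a real matrix: `‖A‖_F = √(tr (A * Aᵀ))`. -/
noncomputable def frobNorm {m n : Type*} [Fintype m] [Fintype n] (A : Matrix m n ℝ) : ℝ :=
  Real.sqrt (Matrix.trace (A * Aᵀ))

/-- The ordered product `∏_{i=k}^{l} B_{t−i} = B_{t−k} B_{t−k−1} ⋯ B_{t−l}`. -/
noncomputable def ordProd {p : ℕ} (B : ℕ → Matrix (Fin p) (Fin p) ℝ) (t k l : ℕ) :
    Matrix (Fin p) (Fin p) ℝ :=
  ((List.range (l - k + 1)).map fun i => B (t - (k + i))).prod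

open Topology Finset

attribute [local instance] Matrix.frobeniusNormedAddCommGroup Matrix.frobeniusNormedRing
  Matrix.frobeniusNormedSpace

lemma frobNorm_eq_norm {m n : Type*} [Fintype m] [Fintype n] (A : Matrix m n ℝ) :
    frobNorm A = ‖A‖ := by
  rw [Matrix.frobenius_norm_def, frobNorm, Matrix.trace, Real.sqrt_eq_rpow]
  simp only [Matrix.diag_apply, Matrix.mul_apply, Matrix.transpose_apply, Real.norm_eq_abs,
    Real.rpow_two, sq, abs_mul_abs_self]

lemma frobenius_norm_mul_mul_transpose_le {m n : Type*} [Fintype m] [Fintype n]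
    (X : Matrix m n ℝ) (Y : Matrix n n ℝ) : ‖X * Y * Xᵀ‖ ≤ ‖X‖ ^ 2 * ‖Y‖ :=
  calc ‖X * Y * Xᵀ‖ ≤ ‖X‖ * ‖Y‖ * ‖Xᵀ‖ := (Matrix.frobenius_norm_mul _ _).trans
        (mul_le_mul_of_nonneg_right (Matrix.frobenius_norm_mul _ _) (norm_nonneg _))
    _ = ‖X‖ ^ 2 * ‖Y‖ := by rw [Matrix.frobenius_norm_transpose]; ring

lemma tendsto_of_norm_sub_le_geometric {E : Type*} [SeminormedAddCommGroup E] {x : ℕ → E}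
    {a : E} {M r : ℝ} (hr₀ : 0 ≤ r) (hr₁ : r < 1) (h : ∀ t, 1 ≤ t → ‖x t - a‖ ≤ M * r ^ t) :
    Tendsto x atTop (𝓝 a) := by
  rw [tendsto_iff_norm_sub_tendsto_zero]
  refine squeeze_zero' (.of_forall fun _ => norm_nonneg _) (eventually_atTop.2 ⟨1, h⟩) ?_
  simpa using (tendsto_pow_atTop_nhds_zero_of_lt_one hr₀ hr₁).const_mul M

lemma tendsto_sum_range_of_dominated {G : Type*} [NormedAddCommGroup G] [CompleteSpace G]
    {S : ℕ → ℕ → G} {L : ℕ → G} {bound : ℕ → ℝ} {n : ℕ → ℕ} (hbound : Summable bound)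
    (hn : Tendsto n atTop atTop) (hS : ∀ j, Tendsto (S · j) atTop (𝓝 (L j)))
    (hS_le : ∀ t j, j < n t → ‖S t j‖ ≤ bound j) :
    Tendsto (fun t => ∑ j ∈ range (n t), S t j) atTop (𝓝 (∑' j, L j)) := by
  refine (tendsto_tsum_of_dominated_convergence (f := fun t => Set.indicator ↑(range (n t)) (S t))
    hbound (fun j => ?_) (.of_forall fun t j => ?_)).congr fun t => (sum_eq_tsum_indicator _ _).symm
  · refine (hS j).congr' ((hn.eventually_gt_atTop j).mono fun t ht => ?_)
    exact (Set.indicator_of_mem (mem_coe.2 (mem_range.2 ht)) _).symm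
  · by_cases hj : j < n t
    · rw [Set.indicator_of_mem (mem_coe.2 (mem_range.2 hj))]
      exact hS_le t j hj
    · obtain ⟨t', ht'⟩ := (hn.eventually_gt_atTop j).exists
      rw [Set.indicator_of_notMem (by simpa using hj), norm_zero]
      exact (norm_nonneg _).trans (hS_le t' j ht')

section ordProd

variable {p : ℕ} (B : ℕ → Matrix (Fin p) (Fin p) ℝ)

lemma ordProd_zero_zero (t : ℕ) : ordProd B t 0 0 = B t := by
  simp [ordProd]

lemma ordProd_zero_succ (t j : ℕ) :
    ordProd B t 0 (j + 1) = ordProd B t 0 j * B (t - (j + 1)) := by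
  simp [ordProd, List.range_succ, mul_assoc]

lemma ordProd_zero_eq_mul {t m j : ℕ} (h : m < j) :
    ordProd B t 0 j = ordProd B t 0 m * ordProd B t (m + 1) j := by
  rw [ordProd, ordProd, ordProd, show j - 0 + 1 = m - 0 + 1 + (j - (m + 1) + 1) by omega,
    List.range_add, List.map_append, List.prod_append, List.map_map]
  simp [Function.comp_def]

lemma ordProd_zero_sub_pow (Y : Matrix (Fin p) (Fin p) ℝ) (t j : ℕ) :
    ordProd B t 0 j - Y ^ (j + 1) = (B t - Y) * Y ^ j +
      ∑ i ∈ range j, ordProd B t 0 i * (B (t - (i + 1)) - Y) * Y ^ (j - 1 - i) := by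
  induction j with
  | zero => simp [ordProd_zero_zero]
  | succ j ih =>
    have hstep : ordProd B t 0 (j + 1) - Y ^ (j + 2) =
        (ordProd B t 0 j - Y ^ (j + 1)) * Y + ordProd B t 0 j * (B (t - (j + 1)) - Y) := by
      rw [ordProd_zero_succ, pow_succ Y (j + 1)]
      noncomm_ring
    rw [hstep, ih, add_mul, sum_mul, sum_range_succ, Nat.add_sub_cancel, Nat.sub_self, pow_zero,
      mul_one, mul_assoc, ← pow_succ, add_assoc]
    congr 2
    refine sum_congr rfl fun i hi => ?_
    rw [mul_assoc, ← pow_succ]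
    congr 2
    have := mem_range.1 hi
    omega

end ordProd

section bounds

variable {p : ℕ} {B : ℕ → Matrix (Fin p) (Fin p) ℝ} {Blim : Matrix (Fin p) (Fin p) ℝ}
  {M₁ r₁ M₃ : ℝ}

lemma exists_norm_ordProd_sub_pow_le (hr₀ : 0 ≤ r₁) (hr₁ : r₁ < 1)
    (hB : ∀ t, 1 ≤ t → ‖B t - Blim‖ ≤ M₁ * r₁ ^ t) (hBpow : ∀ k, ‖Blim ^ k‖ ≤ M₁ * r₁ ^ k)
    (hbdd : ∀ t l, l < t → ‖ordProd B t 0 l‖ ≤ M₃) :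
    ∃ C, 0 ≤ C ∧ ∀ t j, j < t → ‖ordProd B t 0 j - Blim ^ (j + 1)‖ ≤ C * r₁ ^ (t - j) := by
  have hM₁ : 0 ≤ M₁ := by simpa using (norm_nonneg _).trans (hBpow 0)
  have hM₃ : 0 ≤ M₃ := (norm_nonneg _).trans (hbdd 1 0 one_pos)
  have h1r : 0 < 1 - r₁ := sub_pos.2 hr₁
  refine ⟨M₁ * M₁ + M₃ * M₁ * M₁ / (1 - r₁), by positivity, fun t j hj => ?_⟩
  have hpow {a b : ℕ} (h : b ≤ a) : r₁ ^ a ≤ r₁ ^ b := pow_le_pow_of_le_one hr₀ hr₁.le h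
  have hfirst : ‖(B t - Blim) * Blim ^ j‖ ≤ M₁ * M₁ * r₁ ^ (t - j) :=
    calc _ ≤ (M₁ * r₁ ^ t) * (M₁ * r₁ ^ j) := (norm_mul_le _ _).trans <|
          mul_le_mul (hB t (by omega)) (hBpow j) (norm_nonneg _) (by positivity)
      _ = M₁ * M₁ * r₁ ^ (t + j) := by ring
      _ ≤ M₁ * M₁ * r₁ ^ (t - j) := mul_le_mul_of_nonneg_left (hpow (by omega)) (by positivity)
  have hterm : ∀ i ∈ range j,
      ‖ordProd B t 0 i * (B (t - (i + 1)) - Blim) * Blim ^ (j - 1 - i)‖ ≤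
        M₃ * M₁ * M₁ * r₁ ^ (t - j) * r₁ ^ (j - 1 - i) := by
    intro i hi
    have hij := mem_range.1 hi
    calc _ ≤ M₃ * (M₁ * r₁ ^ (t - (i + 1))) * (M₁ * r₁ ^ (j - 1 - i)) :=
          norm_mul₃_le.trans <| mul_le_mul (mul_le_mul (hbdd t i (by omega))
            (hB _ (by omega)) (norm_nonneg _) hM₃) (hBpow _) (norm_nonneg _) (by positivity)
      _ ≤ M₃ * (M₁ * r₁ ^ (t - j)) * (M₁ * r₁ ^ (j - 1 - i)) := by
          gcongr M₃ * (M₁ * ?_) * _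
          exact hpow (by omega)
      _ = M₃ * M₁ * M₁ * r₁ ^ (t - j) * r₁ ^ (j - 1 - i) := by ring
  have hgeom : ∑ i ∈ range j, r₁ ^ (j - 1 - i) ≤ 1 / (1 - r₁) := by
    rw [sum_range_reflect (r₁ ^ ·) j]
    simpa using geom_sum_Ico_le_of_lt_one (m := 0) (n := j) hr₀ hr₁
  rw [ordProd_zero_sub_pow]
  calc _ ≤ ‖(B t - Blim) * Blim ^ j‖ + ∑ i ∈ range j,
          ‖ordProd B t 0 i * (B (t - (i + 1)) - Blim) * Blim ^ (j - 1 - i)‖ :=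
        (norm_add_le _ _).trans (add_le_add_right (norm_sum_le _ _) _)
    _ ≤ M₁ * M₁ * r₁ ^ (t - j) +
          ∑ i ∈ range j, M₃ * M₁ * M₁ * r₁ ^ (t - j) * r₁ ^ (j - 1 - i) :=
        add_le_add hfirst (sum_le_sum hterm)
    _ ≤ M₁ * M₁ * r₁ ^ (t - j) + M₃ * M₁ * M₁ * r₁ ^ (t - j) * (1 / (1 - r₁)) := by
        rw [← mul_sum]; gcongr
    _ = (M₁ * M₁ + M₃ * M₁ * M₁ / (1 - r₁)) * r₁ ^ (t - j) := by ring

lemma exists_norm_ordProd_sq_le (hr₀ : 0 ≤ r₁) (hr₁ : r₁ < 1)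
    (hB : ∀ t, 1 ≤ t → ‖B t - Blim‖ ≤ M₁ * r₁ ^ t) (hBpow : ∀ k, ‖Blim ^ k‖ ≤ M₁ * r₁ ^ k)
    (hbdd : ∀ t k l, k ≤ l → l < t → ‖ordProd B t k l‖ ≤ M₃) :
    ∃ D, ∀ t j, j < t → ‖ordProd B t 0 j‖ ^ 2 ≤ D * r₁ ^ j := by
  obtain ⟨C, hC, hdev⟩ :=
    exists_norm_ordProd_sub_pow_le hr₀ hr₁ hB hBpow fun t l => hbdd t 0 l l.zero_le
  refine ⟨((M₁ + C) * max M₃ 1) ^ 2, fun t j hj => ?_⟩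
  have hhead : ‖ordProd B t 0 (j / 2)‖ ≤ (M₁ + C) * r₁ ^ (j / 2 + 1) :=
    calc _ ≤ ‖Blim ^ (j / 2 + 1)‖ + ‖ordProd B t 0 (j / 2) - Blim ^ (j / 2 + 1)‖ :=
          norm_le_insert' _ _
      _ ≤ M₁ * r₁ ^ (j / 2 + 1) + C * r₁ ^ (j / 2 + 1) := by
          refine add_le_add (hBpow _) ((hdev t _ (by omega)).trans ?_)
          exact mul_le_mul_of_nonneg_left (pow_le_pow_of_le_one hr₀ hr₁.le (by omega)) hC
      _ = (M₁ + C) * r₁ ^ (j / 2 + 1) := by ring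
  have hhead_nonneg : 0 ≤ (M₁ + C) * r₁ ^ (j / 2 + 1) := (norm_nonneg _).trans hhead
  have hsplit_le : ‖ordProd B t 0 j‖ ≤ (M₁ + C) * r₁ ^ (j / 2 + 1) * max M₃ 1 := by
    by_cases hsplit : j / 2 < j
    · rw [ordProd_zero_eq_mul B hsplit]
      exact (norm_mul_le _ _).trans <| mul_le_mul hhead
        ((hbdd _ _ _ hsplit hj).trans (le_max_left _ _)) (norm_nonneg _) hhead_nonneg
    · have hj0 : j / 2 = j := by omega
      rw [hj0] at hhead hhead_nonneg ⊢
      exact hhead.trans (le_mul_of_one_le_right hhead_nonneg (le_max_right _ _))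
  calc ‖ordProd B t 0 j‖ ^ 2 ≤ ((M₁ + C) * r₁ ^ (j / 2 + 1) * max M₃ 1) ^ 2 := by gcongr
    _ = ((M₁ + C) * max M₃ 1) ^ 2 * r₁ ^ (2 * (j / 2 + 1)) := by ring
    _ ≤ ((M₁ + C) * max M₃ 1) ^ 2 * r₁ ^ j :=
        mul_le_mul_of_nonneg_left (pow_le_pow_of_le_one hr₀ hr₁.le (by omega)) (by positivity)

lemma tendsto_ordProd_zero_pow (hr₀ : 0 ≤ r₁) (hr₁ : r₁ < 1)
    (hB : ∀ t, 1 ≤ t → ‖B t - Blim‖ ≤ M₁ * r₁ ^ t) (hBpow : ∀ k, ‖Blim ^ k‖ ≤ M₁ * r₁ ^ k)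
    (hbdd : ∀ t l, l < t → ‖ordProd B t 0 l‖ ≤ M₃) (j : ℕ) :
    Tendsto (fun t => ordProd B t 0 j) atTop (𝓝 (Blim ^ (j + 1))) := by
  obtain ⟨C, -, hdev⟩ := exists_norm_ordProd_sub_pow_le hr₀ hr₁ hB hBpow hbdd
  rw [← tendsto_add_atTop_iff_nat j]
  exact tendsto_of_norm_sub_le_geometric hr₀ hr₁ fun t ht => by
    simpa using hdev (t + j) j (by omega)

lemma tendsto_ordProd_mul_mul_transpose {A : ℕ → Matrix (Fin p) (Fin p) ℝ}
    {Alim : Matrix (Fin p) (Fin p) ℝ} {j : ℕ}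
    (hP : Tendsto (fun t => ordProd B t 0 j) atTop (𝓝 (Blim ^ (j + 1))))
    (hA : Tendsto A atTop (𝓝 Alim)) :
    Tendsto (fun t => ordProd B t 0 j * A (t - j - 1) * (ordProd B t 0 j)ᵀ) atTop
      (𝓝 (Blim ^ (j + 1) * Alim * (Blim ^ (j + 1))ᵀ)) :=
  (hP.mul (hA.comp ((tendsto_sub_atTop_nat 1).comp (tendsto_sub_atTop_nat j)))).mul
    ((Continuous.matrix_transpose continuous_id).continuousAt.tendsto.comp hP)

end bounds

theorem partial_sums_tendsto_series_limit_general
    {p : ℕ} (B : ℕ → Matrix (Fin p) (Fin p) ℝ) (Blim : Matrix (Fin p) (Fin p) ℝ)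
    (A : ℕ → Matrix (Fin p) (Fin p) ℝ) (Alim : Matrix (Fin p) (Fin p) ℝ)
    (M₁ r₁ : ℝ) (hr₁ : r₁ ∈ Ioo (0 : ℝ) 1)
    (hB : ∀ t : ℕ, 1 ≤ t → frobNorm (B t - Blim) ≤ M₁ * r₁ ^ t)
    (hBpow : ∀ k : ℕ, frobNorm (Blim ^ k) ≤ M₁ * r₁ ^ k)
    (M₃ : ℝ)
    (hbdd : ∀ t k l : ℕ, k ≤ l → l < t → frobNorm (ordProd B t k l) ≤ M₃)
    (M₂ r₂ : ℝ) (hM₂ : 0 < M₂) (hr₂ : r₂ ∈ Ioo (0 : ℝ) 1)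
    (hA : ∀ t : ℕ, 1 ≤ t → frobNorm (A t - Alim) ≤ M₂ * r₂ ^ t) :
    ∃ Sinf : Matrix (Fin p) (Fin p) ℝ,
      (Summable fun j : ℕ => frobNorm (Blim ^ (j + 1) * Alim * (Blim ^ (j + 1))ᵀ)) ∧
      HasSum (fun j : ℕ => Blim ^ (j + 1) * Alim * (Blim ^ (j + 1))ᵀ) Sinf ∧
      Tendsto (fun t : ℕ =>
          frobNorm ((∑ j ∈ Finset.range (t - 1),
            ordProd B t 0 j * A (t - j - 1) * (ordProd B t 0 j)ᵀ) - Sinf))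
        atTop (nhds 0) := by
  simp only [frobNorm_eq_norm] at hB hBpow hbdd hA ⊢
  obtain ⟨hr₁0, hr₁1⟩ := hr₁
  obtain ⟨hr₂0, hr₂1⟩ := hr₂
  obtain ⟨D, hD⟩ := exists_norm_ordProd_sq_le hr₁0.le hr₁1 hB hBpow hbdd
  have hA_le {s : ℕ} (hs : 1 ≤ s) : ‖A s‖ ≤ ‖Alim‖ + M₂ :=
    (norm_le_insert' _ _).trans <| add_le_add_right ((hA s hs).trans <|
      mul_le_of_le_one_right hM₂.le (pow_le_one₀ hr₂0.le hr₂1.le)) _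
  have hS (j : ℕ) := tendsto_ordProd_mul_mul_transpose
    (tendsto_ordProd_zero_pow hr₁0.le hr₁1 hB hBpow (fun t l => hbdd t 0 l l.zero_le) j)
    (tendsto_of_norm_sub_le_geometric hr₂0.le hr₂1 hA)
  have hS_le (t j : ℕ) (hj : j < t - 1) :
      ‖ordProd B t 0 j * A (t - j - 1) * (ordProd B t 0 j)ᵀ‖ ≤ D * (‖Alim‖ + M₂) * r₁ ^ j :=
    calc _ ≤ ‖ordProd B t 0 j‖ ^ 2 * ‖A (t - j - 1)‖ := frobenius_norm_mul_mul_transpose_le _ _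
      _ ≤ D * r₁ ^ j * (‖Alim‖ + M₂) := mul_le_mul (hD t j (by omega)) (hA_le (by omega))
          (norm_nonneg _) ((sq_nonneg _).trans (hD t j (by omega)))
      _ = D * (‖Alim‖ + M₂) * r₁ ^ j := by ring
  have hbound : Summable fun j => D * (‖Alim‖ + M₂) * r₁ ^ j :=
    (summable_geometric_of_lt_one hr₁0.le hr₁1).mul_left _
  have hL : Summable fun j => ‖Blim ^ (j + 1) * Alim * (Blim ^ (j + 1))ᵀ‖ :=
    hbound.of_nonneg_of_le (fun _ => norm_nonneg _) fun j => le_of_tendsto (hS j).norm <|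
      (eventually_gt_atTop (j + 1)).mono fun t ht => hS_le t j (by omega)
  refine ⟨_, hL, hL.of_norm.hasSum, ?_⟩
  rw [← tendsto_iff_norm_sub_tendsto_zero]
  exact tendsto_sum_range_of_dominated hbound (tendsto_sub_atTop_nat 1) hS hS_le

/-- Under hypotheses (i), (ii) on `(B_t)`, `B` and geometric convergence
`A_t → A`, the series `S*_∞ = Σ_{j≥0} B^{j+1} A (B^{j+1})ᵀ` converges absolutely in
Frobenius norm, and `S_t = Σ_{j=0}^{t−2} (B_t ⋯ B_{t−j}) A_{t−j−1} (B_t ⋯ B_{t−j})ᵀ`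
converges to `S*_∞` as `t → ∞`. -/
theorem partial_sums_tendsto_series_limit
    {p : ℕ} (B : ℕ → Matrix (Fin p) (Fin p) ℝ) (Blim : Matrix (Fin p) (Fin p) ℝ)
    (A : ℕ → Matrix (Fin p) (Fin p) ℝ) (Alim : Matrix (Fin p) (Fin p) ℝ)
    (M₁ r₁ : ℝ) (hM₁ : 0 < M₁) (hr₁ : r₁ ∈ Ioo (0 : ℝ) 1)
    (hB : ∀ t : ℕ, 1 ≤ t → frobNorm (B t - Blim) ≤ M₁ * r₁ ^ t)
    (hBpow : ∀ k : ℕ, frobNorm (Blim ^ k) ≤ M₁ * r₁ ^ k)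
    (M₃ : ℝ) (hM₃ : 0 < M₃)
    (hbdd : ∀ t k l : ℕ, k ≤ l → l < t → frobNorm (ordProd B t k l) ≤ M₃)
    (M₂ r₂ : ℝ) (hM₂ : 0 < M₂) (hr₂ : r₂ ∈ Ioo (0 : ℝ) 1)
    (hA : ∀ t : ℕ, 1 ≤ t → frobNorm (A t - Alim) ≤ M₂ * r₂ ^ t) :
    ∃ Sinf : Matrix (Fin p) (Fin p) ℝ,
      (Summable fun j : ℕ => frobNorm (Blim ^ (j + 1) * Alim * (Blim ^ (j + 1))ᵀ)) ∧
      HasSum (fun j : ℕ => Blim ^ (j + 1) * Alim * (Blim ^ (j + 1))ᵀ) Sinf ∧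
      Tendsto (fun t : ℕ =>
          frobNorm ((∑ j ∈ Finset.range (t - 1),
            ordProd B t 0 j * A (t - j - 1) * (ordProd B t 0 j)ᵀ) - Sinf))
        atTop (nhds 0) :=
  partial_sums_tendsto_series_limit_general B Blim A Alim M₁ r₁ hr₁ hB hBpow M₃ hbdd M₂ r₂ hM₂ hr₂
    hA
end

section
/- In the time-invariant misspecified Kalman setting, assume additionally: (a) for every t there is a deterministic d×d matrix F_t with E[v_t v_tᵀ | 𝔉_{t−1}] = F_t almost surely; (b) the matrix sequences F_t, K_t and K'_t converge (to matrices F, K, K' respectively) as t → ∞; (c) the sequences E[a_t − a'_t] and E[(a_t − a'_t)(a_t − a'_t)ᵀ] converge as t → ∞. Then there exists a constant M > 0 such that for all t ≥ 1, ‖Cov(v'_t, a_{t+1} − a'_{t+1})‖_F < M, where Cov(v'_t, a_{t+1} − a'_{t+1}) := E[(v'_t − E v'_t)(a_{t+1} − a'_{t+1} − E(a_{t+1} − a'_{t+1}))ᵀ]. -/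
open Matrix MeasureTheory Filter

/-!
A cross-covariance is bounded by second moments: `|Cov(X, Y)| ≤ (E X² + E Y²) / 2`.
Since `v'_t = v_t + Z (a_t − a'_t)`, the second moment of `v'_t` is controlled by
`E[v_t v_tᵀ] = F_t` (tower property) and by `E[(a_t − a'_t)(a_t − a'_t)ᵀ]`; both converge,
hence are bounded, and the latter also bounds the second moment of `a_{t+1} − a'_{t+1}`.
-/

open ProbabilityTheory

section Frobenius

variable {m n : Type*} [Fintype m] [Fintype n]

lemma frobNorm_eq_sqrt_sum_sq (A : Matrix m n ℝ) :
    frobNorm A = √(∑ i, ∑ j, A i j ^ 2) := by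
  simp [frobNorm, Matrix.trace, Matrix.mul_apply, sq]

lemma abs_apply_le_frobNorm (A : Matrix m n ℝ) (i : m) (j : n) : |A i j| ≤ frobNorm A := by
  rw [frobNorm_eq_sqrt_sum_sq, ← Real.sqrt_sq_eq_abs]
  refine Real.sqrt_le_sqrt ?_
  calc A i j ^ 2 ≤ ∑ j', A i j' ^ 2 :=
        Finset.single_le_sum (fun _ _ => sq_nonneg _) (Finset.mem_univ j)
    _ ≤ ∑ i', ∑ j', A i' j' ^ 2 :=
        Finset.single_le_sum (f := fun i' => ∑ j', A i' j' ^ 2)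
          (fun _ _ => Finset.sum_nonneg fun _ _ => sq_nonneg _) (Finset.mem_univ i)

lemma frobNorm_le_of_abs_apply_le {A : Matrix m n ℝ} {B : m → n → ℝ}
    (h : ∀ i j, |A i j| ≤ B i j) : frobNorm A ≤ √(∑ i, ∑ j, B i j ^ 2) := by
  rw [frobNorm_eq_sqrt_sum_sq]
  refine Real.sqrt_le_sqrt (Finset.sum_le_sum fun i _ => Finset.sum_le_sum fun j _ => ?_)
  exact sq_le_sq' (abs_le.mp (h i j)).1 (abs_le.mp (h i j)).2

lemma exists_frobNorm_lt_of_forall_abs_apply_le {ι : Type*} {M : ι → Matrix m n ℝ}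
    {P : ι → Prop} (h : ∀ i j, ∃ B, ∀ t, P t → |M t i j| ≤ B) :
    ∃ C > (0 : ℝ), ∀ t, P t → frobNorm (M t) < C := by
  choose B hB using h
  refine ⟨√(∑ i, ∑ j, B i j ^ 2) + 1, by positivity, fun t ht => ?_⟩
  exact (frobNorm_le_of_abs_apply_le fun i j => hB i j t ht).trans_lt (lt_add_one _)

lemma tendsto_apply_of_tendsto_frobNorm_sub {M : ℕ → Matrix m n ℝ} {L : Matrix m n ℝ}
    (h : Tendsto (fun t => frobNorm (M t - L)) atTop (nhds 0)) (i : m) (j : n) :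
    Tendsto (fun t => M t i j) atTop (nhds (L i j)) := by
  have hsub : Tendsto (fun t => M t i j - L i j) atTop (nhds 0) :=
    squeeze_zero_norm (fun t => abs_apply_le_frobNorm (M t - L) i j) h
  simpa using hsub.add_const (L i j)

lemma exists_forall_apply_le_of_tendsto_frobNorm_sub {M : ℕ → Matrix m n ℝ} {L : Matrix m n ℝ}
    (h : Tendsto (fun t => frobNorm (M t - L)) atTop (nhds 0)) :
    ∃ B : m → n → ℝ, ∀ i j t, M t i j ≤ B i j := by
  choose B hB using fun i j => (tendsto_apply_of_tendsto_frobNorm_sub h i j).bddAbove_range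
  exact ⟨B, fun i j t => hB i j ⟨t, rfl⟩⟩

end Frobenius

section Moments

variable {Ω : Type*} {mΩ : MeasurableSpace Ω} {μ : Measure Ω}

lemma integral_add_sum_mul_sq_le {ι : Type*} [Fintype ι] {X : Ω → ℝ} {W : ι → Ω → ℝ}
    (z : ι → ℝ) (hX : MemLp X 2 μ) (hW : ∀ k, MemLp (W k) 2 μ) :
    ∫ ω, (X ω + ∑ k, z k * W k ω) ^ 2 ∂μ
      ≤ 2 * ∫ ω, X ω ^ 2 ∂μ + 2 * (∑ k, z k ^ 2) * ∑ k, ∫ ω, W k ω ^ 2 ∂μ := by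
  have hWsq : Integrable (fun ω => ∑ k, W k ω ^ 2) μ :=
    integrable_finsetSum _ fun k _ => (hW k).integrable_sq
  have hpt : ∀ ω, (X ω + ∑ k, z k * W k ω) ^ 2
      ≤ 2 * X ω ^ 2 + 2 * (∑ k, z k ^ 2) * ∑ k, W k ω ^ 2 := fun ω => by
    have hcs := Finset.sum_mul_sq_le_sq_mul_sq Finset.univ z (fun k => W k ω)
    nlinarith [sq_nonneg (X ω - ∑ k, z k * W k ω)]
  have hsum : MemLp (fun ω => X ω + ∑ k, z k * W k ω) 2 μ :=
    hX.add (memLp_finsetSum _ fun k _ => (hW k).const_mul (z k))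
  calc ∫ ω, (X ω + ∑ k, z k * W k ω) ^ 2 ∂μ
      ≤ ∫ ω, 2 * X ω ^ 2 + 2 * (∑ k, z k ^ 2) * ∑ k, W k ω ^ 2 ∂μ :=
        integral_mono hsum.integrable_sq
          ((hX.integrable_sq.const_mul 2).add (hWsq.const_mul _)) hpt
    _ = 2 * ∫ ω, X ω ^ 2 ∂μ + 2 * (∑ k, z k ^ 2) * ∑ k, ∫ ω, W k ω ^ 2 ∂μ := by
        rw [integral_add (hX.integrable_sq.const_mul 2) (hWsq.const_mul _),
          integral_const_mul, integral_const_mul,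
          integral_finsetSum _ fun k _ => (hW k).integrable_sq]

variable [IsProbabilityMeasure μ]

lemma abs_covariance_le_half_add {X Y : Ω → ℝ} (hX : MemLp X 2 μ) (hY : MemLp Y 2 μ) :
    |cov[X, Y; μ]| ≤ (∫ ω, X ω ^ 2 ∂μ + ∫ ω, Y ω ^ 2 ∂μ) / 2 := by
  have hXc : MemLp (fun ω => X ω - μ[X]) 2 μ := hX.sub (memLp_const _)
  have hYc : MemLp (fun ω => Y ω - μ[Y]) 2 μ := hY.sub (memLp_const _)
  have hmid : |cov[X, Y; μ]| ≤ (Var[X; μ] + Var[Y; μ]) / 2 := by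
    rw [covariance, variance_eq_integral hX.aemeasurable, variance_eq_integral hY.aemeasurable,
      ← integral_add hXc.integrable_sq hYc.integrable_sq, ← integral_div]
    refine abs_integral_le_integral_abs.trans (integral_mono (hXc.integrable_mul hYc).abs
      ((hXc.integrable_sq.add hYc.integrable_sq).div_const 2) fun ω => ?_)
    simp only [abs_mul]
    nlinarith [two_mul_le_add_sq |X ω - μ[X]| |Y ω - μ[Y]|, sq_abs (X ω - μ[X]),
      sq_abs (Y ω - μ[Y])]
  have hVarX : Var[X; μ] ≤ ∫ ω, X ω ^ 2 ∂μ := variance_le_expectation_sq hX.aestronglyMeasurable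
  have hVarY : Var[Y; μ] ≤ ∫ ω, Y ω ^ 2 ∂μ := variance_le_expectation_sq hY.aestronglyMeasurable
  linarith

lemma integral_eq_of_condExp_ae_eq_const {m : MeasurableSpace Ω} (hm : m ≤ mΩ) {f : Ω → ℝ}
    {c : ℝ} (h : μ[f|m] =ᵐ[μ] fun _ => c) : μ[f] = c := by
  rw [← integral_condExp hm, integral_congr_ae h, integral_const, probReal_univ, one_smul]

end Moments

theorem cov_misspecified_error_state_diff_bounded_general
    {Ω : Type*} {m0 : MeasurableSpace Ω} (μ : Measure Ω) [IsProbabilityMeasure μ]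
    (ℱ : Filtration ℕ m0)
    {d p : ℕ}
    (Z : Matrix (Fin d) (Fin p) ℝ)
    (y : ℕ → Ω → Fin d → ℝ)
    (hy_L2 : ∀ t, MemLp (y t) 2 μ)
    (a a' : ℕ → Ω → Fin p → ℝ)
    (ha_L2 : ∀ t, MemLp (a t) 2 μ) (ha'_L2 : ∀ t, MemLp (a' t) 2 μ)
    (v v' : ℕ → Ω → Fin d → ℝ)
    (hv : ∀ t ω, v t ω = y t ω - Z.mulVec (a t ω))
    (hv' : ∀ t ω, v' t ω = y t ω - Z.mulVec (a' t ω))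
    -- (a) deterministic one-step-ahead forecast error covariance matrices
    (F : ℕ → Matrix (Fin d) (Fin d) ℝ)
    (hF : ∀ t, 1 ≤ t → ∀ i j,
      μ[fun ω => v t ω i * v t ω j | ℱ (t - 1)] =ᵐ[μ] fun _ => F t i j)
    -- (b) convergence of `F_t`, `K_t`, `K'_t`
    (Flim : Matrix (Fin d) (Fin d) ℝ)
    (hFconv : Tendsto (fun t => frobNorm (F t - Flim)) atTop (nhds 0))
    -- (c) convergence of the first two moments of `a_t − a'_t`
    (Mlim : Matrix (Fin p) (Fin p) ℝ)
    (hMconv : Tendsto (fun t => frobNorm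
        ((Matrix.of fun i j => ∫ ω, (a t ω i - a' t ω i) * (a t ω j - a' t ω j) ∂μ)
          - Mlim)) atTop (nhds 0)) :
    ∃ M > (0 : ℝ), ∀ t : ℕ, 1 ≤ t →
      frobNorm (Matrix.of fun i j =>
          ∫ ω, (v' t ω i - ∫ ω', v' t ω' i ∂μ)
            * ((a (t + 1) ω j - a' (t + 1) ω j)
              - ∫ ω', (a (t + 1) ω' j - a' (t + 1) ω' j) ∂μ) ∂μ) < M := by
  have hv_L2 : ∀ t, MemLp (v t) 2 μ := fun t => by
    rw [funext (hv t)]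
    exact (hy_L2 t).sub (Z.mulVecLin.toContinuousLinearMap.comp_memLp' (ha_L2 t))
  have hv'_L2 : ∀ t, MemLp (v' t) 2 μ := fun t => by
    rw [funext (hv' t)]
    exact (hy_L2 t).sub (Z.mulVecLin.toContinuousLinearMap.comp_memLp' (ha'_L2 t))
  have he_L2 : ∀ t k, MemLp (fun ω => a t ω k - a' t ω k) 2 μ := fun t =>
    ((ha_L2 t).sub (ha'_L2 t)).eval
  have hv'_eq : ∀ t ω i, v' t ω i = v t ω i + ∑ k, Z i k * (a t ω k - a' t ω k) := by
    intro t ω i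
    simp only [hv, hv', Pi.sub_apply, Matrix.mulVec, dotProduct, mul_sub, Finset.sum_sub_distrib]
    ring
  obtain ⟨BF, hBF⟩ := exists_forall_apply_le_of_tendsto_frobNorm_sub hFconv
  obtain ⟨BM, hBM⟩ := exists_forall_apply_le_of_tendsto_frobNorm_sub hMconv
  have hv_sq : ∀ t, 1 ≤ t → ∀ i, ∫ ω, v t ω i ^ 2 ∂μ ≤ BF i i := fun t ht i => by
    simpa only [sq, integral_eq_of_condExp_ae_eq_const (ℱ.le _) (hF t ht i i)] using hBF i i t
  have he_sq : ∀ t k, ∫ ω, (a t ω k - a' t ω k) ^ 2 ∂μ ≤ BM k k := fun t k => by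
    simpa only [sq, Matrix.of_apply] using hBM k k t
  have hv'_sq : ∀ t, 1 ≤ t → ∀ i,
      ∫ ω, v' t ω i ^ 2 ∂μ ≤ 2 * BF i i + 2 * (∑ k, Z i k ^ 2) * ∑ k, BM k k := by
    intro t ht i
    simp only [hv'_eq]
    refine (integral_add_sum_mul_sq_le _ ((hv_L2 t).eval i) (he_L2 t)).trans ?_
    gcongr with k
    exacts [hv_sq t ht i, he_sq t k]
  refine exists_frobNorm_lt_of_forall_abs_apply_le fun i j =>
    ⟨(2 * BF i i + 2 * (∑ k, Z i k ^ 2) * ∑ k, BM k k + BM j j) / 2, fun t ht => ?_⟩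
  refine (abs_covariance_le_half_add ((hv'_L2 t).eval i) (he_L2 (t + 1) j)).trans ?_
  gcongr
  exacts [hv'_sq t ht i, he_sq (t + 1) j]

/-- In the time-invariant misspecified Kalman setting, if `F_t`, `K_t`,
`K'_t` converge and the first two moments of `a_t − a'_t` converge, then the
cross-covariance matrices `Cov(v'_t, a_{t+1} − a'_{t+1})` are uniformly bounded in
Frobenius norm. -/
theorem cov_misspecified_error_state_diff_bounded
    {Ω : Type*} {m0 : MeasurableSpace Ω} (μ : Measure Ω) [IsProbabilityMeasure μ]
    (ℱ : Filtration ℕ m0) (hℱ0 : ℱ 0 = ⊥)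
    {d p : ℕ}
    (Z : Matrix (Fin d) (Fin p) ℝ) (T : Matrix (Fin p) (Fin p) ℝ)
    (K K' : ℕ → Matrix (Fin p) (Fin d) ℝ)
    (L' : ℕ → Matrix (Fin p) (Fin p) ℝ)
    (hL' : ∀ t, L' t = 1 - K' t * Z)
    (y : ℕ → Ω → Fin d → ℝ)
    (hy_meas : ∀ t, StronglyMeasurable[ℱ t] (y t))
    (hy_L2 : ∀ t, MemLp (y t) 2 μ)
    (a a' : ℕ → Ω → Fin p → ℝ)
    (a₁ a₁' : Fin p → ℝ)
    (ha1 : ∀ ω, a 1 ω = a₁) (ha1' : ∀ ω, a' 1 ω = a₁')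
    (ha : ∀ t, 1 ≤ t → ∀ ω,
      a (t + 1) ω = T.mulVec (a t ω) + T.mulVec ((K t).mulVec (y t ω - Z.mulVec (a t ω))))
    (ha' : ∀ t, 1 ≤ t → ∀ ω,
      a' (t + 1) ω
        = T.mulVec (a' t ω) + T.mulVec ((K' t).mulVec (y t ω - Z.mulVec (a' t ω))))
    (ha_L2 : ∀ t, MemLp (a t) 2 μ) (ha'_L2 : ∀ t, MemLp (a' t) 2 μ)
    (v v' : ℕ → Ω → Fin d → ℝ)
    (hv : ∀ t ω, v t ω = y t ω - Z.mulVec (a t ω))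
    (hv' : ∀ t ω, v' t ω = y t ω - Z.mulVec (a' t ω))
    (hcond : ∀ t, 1 ≤ t → μ[y t | ℱ (t - 1)] =ᵐ[μ] fun ω => Z.mulVec (a t ω))
    -- (a) deterministic one-step-ahead forecast error covariance matrices
    (F : ℕ → Matrix (Fin d) (Fin d) ℝ)
    (hF : ∀ t, 1 ≤ t → ∀ i j,
      μ[fun ω => v t ω i * v t ω j | ℱ (t - 1)] =ᵐ[μ] fun _ => F t i j)
    -- (b) convergence of `F_t`, `K_t`, `K'_t`
    (Flim : Matrix (Fin d) (Fin d) ℝ) (Klim K'lim : Matrix (Fin p) (Fin d) ℝ)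
    (hFconv : Tendsto (fun t => frobNorm (F t - Flim)) atTop (nhds 0))
    (hKconv : Tendsto (fun t => frobNorm (K t - Klim)) atTop (nhds 0))
    (hK'conv : Tendsto (fun t => frobNorm (K' t - K'lim)) atTop (nhds 0))
    -- (c) convergence of the first two moments of `a_t − a'_t`
    (mlim : Fin p → ℝ)
    (hmconv : ∀ i, Tendsto (fun t => ∫ ω, (a t ω i - a' t ω i) ∂μ) atTop (nhds (mlim i)))
    (Mlim : Matrix (Fin p) (Fin p) ℝ)
    (hMconv : Tendsto (fun t => frobNorm
        ((Matrix.of fun i j => ∫ ω, (a t ω i - a' t ω i) * (a t ω j - a' t ω j) ∂μ)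
          - Mlim)) atTop (nhds 0)) :
    ∃ M > (0 : ℝ), ∀ t : ℕ, 1 ≤ t →
      frobNorm (Matrix.of fun i j =>
          ∫ ω, (v' t ω i - ∫ ω', v' t ω' i ∂μ)
            * ((a (t + 1) ω j - a' (t + 1) ω j)
              - ∫ ω', (a (t + 1) ω' j - a' (t + 1) ω' j) ∂μ) ∂μ) < M :=
  cov_misspecified_error_state_diff_bounded_general μ ℱ Z y hy_L2 a a' ha_L2 ha'_L2 v v' hv hv' F hF
    Flim hFconv Mlim hMconv
end
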